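/- Let Y be a proper geodesic metric space (with geodesics extendable to rays), y₀ ∈ Y, and f : Y → ℝ continuous and strictly convex along geodesics. Then the following are equivalent: (1) f admits a unique global minimum over Y; (2) f is proper and bounded below; (3) there exist C, D > 0 with f(y) ≥ C·d(y,y₀) − D for all y; (4) lim_{τ→∞} f(γ(τ))/τ > 0 for every unit-speed geodesic ray γ from y₀; (5) there is C > 0 with lim_{τ→∞} f(γ(τ))/τ > C for every such ray. -/

import Mathlib

/-!
Restricted to a geodesic, `f` is a strictly convex function of one real variable, so its secant
slopes from a point increase. A unique minimiser `z` therefore forces linear growth: `f` exceeds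
`f z` by some `c > 0` on the unit sphere about `z`, hence by `c · (d(z, y) - 1)` at every `y`.
Linear growth gives properness and positive asymptotic slopes. Conversely, if the sublevel set
`{f ≤ f y₀}` were unbounded, the geodesics from `y₀` to its far points stay inside it by
convexity; in a proper space they subconverge to a ray from `y₀` along which `f` is bounded above,
so its asymptotic slope is `≤ 0`. A bounded sublevel set is compact, so `f` attains its minimum,
and strict convexity makes the minimiser unique.
-/

open Filter Set Metric Topology

lemma tendsto_affine_div_atTop (C D : ℝ) :
    Tendsto (fun t => (((C * t + D) / t : ℝ) : EReal)) atTop (𝓝 C) := by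
  refine EReal.tendsto_coe.2 ?_
  have h := (tendsto_const_nhds (x := C)).add (tendsto_const_nhds (x := D).div_atTop tendsto_id)
  rw [add_zero] at h
  refine h.congr' ?_
  filter_upwards [eventually_gt_atTop 0] with t ht
  simp only [id]
  field_simp

lemma coe_le_of_tendsto_div {g : ℝ → ℝ} {L : EReal}
    (hL : Tendsto (fun t => ((g t / t : ℝ) : EReal)) atTop (𝓝 L)) {C D : ℝ}
    (h : ∀ t, 0 ≤ t → C * t - D ≤ g t) : (C : EReal) ≤ L := by
  refine le_of_tendsto_of_tendsto (tendsto_affine_div_atTop C (-D)) hL ?_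
  filter_upwards [eventually_gt_atTop 0] with t ht
  exact EReal.coe_le_coe_iff.2 (div_le_div_of_nonneg_right (by linarith [h t ht.le]) ht.le)

lemma le_coe_of_tendsto_div {g : ℝ → ℝ} {L : EReal}
    (hL : Tendsto (fun t => ((g t / t : ℝ) : EReal)) atTop (𝓝 L)) {C D : ℝ}
    (h : ∀ t, 0 ≤ t → g t ≤ C * t + D) : L ≤ C := by
  refine le_of_tendsto_of_tendsto hL (tendsto_affine_div_atTop C D) ?_
  filter_upwards [eventually_gt_atTop 0] with t ht
  exact EReal.coe_le_coe_iff.2 (div_le_div_of_nonneg_right (h t ht.le) ht.le)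

-- `g t / t` differs by `g 0 / t → 0` from the secant slope from `0`, which is monotone.
lemma ConvexOn.exists_tendsto_div_atTop {g : ℝ → ℝ} (hg : ConvexOn ℝ (Ici 0) g) :
    ∃ L : EReal, Tendsto (fun t => ((g t / t : ℝ) : EReal)) atTop (𝓝 L) := by
  set q : ℝ → ℝ := fun t => (g (max t 1) - g 0) / (max t 1 - 0)
  have hq : Monotone q := fun s t hst =>
    hg.secant_mono self_mem_Ici (by simp) (by simp)
      (by positivity) (by positivity) (max_le_max_right 1 hst)
  have hlim := (EReal.continuousAt_add (p := (⨆ t, (q t : EReal), 0)) (Or.inr (by simp))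
    (Or.inr (by simp))).tendsto.comp
    ((tendsto_atTop_iSup (EReal.coe_strictMono.monotone.comp hq)).prodMk_nhds
      (EReal.tendsto_coe.2 (tendsto_const_nhds (x := g 0).div_atTop tendsto_id)))
  rw [add_zero] at hlim
  refine ⟨_, hlim.congr' ?_⟩
  filter_upwards [eventually_ge_atTop 1] with t ht
  simp only [Function.comp_apply, id, q, max_eq_left ht, sub_zero, ← EReal.coe_add]
  congr 1
  field_simp
  ring

section Geodesics

variable {Y : Type*} [MetricSpace Y]

def IsGeodesicOn (γ : ℝ → Y) (s : Set ℝ) : Prop :=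
  ∀ a ∈ s, ∀ b ∈ s, dist (γ a) (γ b) = |a - b|

lemma IsGeodesicOn.mono {γ : ℝ → Y} {s t : Set ℝ} (h : IsGeodesicOn γ s) (hts : t ⊆ s) :
    IsGeodesicOn γ t :=
  fun a ha b hb => h a (hts ha) b (hts hb)

lemma IsGeodesicOn.dist_zero {γ : ℝ → Y} (h : IsGeodesicOn γ (Ici 0)) {t : ℝ} (ht : 0 ≤ t) :
    dist (γ t) (γ 0) = t := by
  rw [h t ht 0 self_mem_Ici, sub_zero, abs_of_nonneg ht]

variable (Y) in
def IsGeodesicSpace : Prop :=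
  ∀ x y : Y, x ≠ y → ∃ γ : ℝ → Y, γ 0 = x ∧ γ (dist x y) = y ∧ IsGeodesicOn γ (Icc 0 (dist x y))

def StrictConvexAlongGeodesics (f : Y → ℝ) : Prop :=
  ∀ (γ : ℝ → Y) (a b : ℝ), a < b → IsGeodesicOn γ (Icc a b) → γ a ≠ γ b → ∀ τ ∈ Ioo a b,
    f (γ τ) < ((τ - a) / (b - a)) * f (γ b) + ((b - τ) / (b - a)) * f (γ a)

namespace StrictConvexAlongGeodesics

variable {f : Y → ℝ} (hf : StrictConvexAlongGeodesics f)
include hf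

lemma strictConvexOn_comp {γ : ℝ → Y} {s : Set ℝ} (hs : Convex ℝ s) (hγ : IsGeodesicOn γ s) :
    StrictConvexOn ℝ s (f ∘ γ) := by
  refine strictConvexOn_of_slope_strict_mono_adjacent hs fun {x y z} hx hz hxy hyz => ?_
  have hxz : 0 < z - x := by linarith
  have hne : γ x ≠ γ z := by
    rw [← dist_pos, hγ x hx z hz, abs_sub_comm, abs_of_pos hxz]
    exact hxz
  have key := hf γ x z (by linarith) (hγ.mono (hs.ordConnected.out hx hz)) hne y ⟨hxy, hyz⟩
  rw [div_mul_eq_mul_div, div_mul_eq_mul_div, ← add_div, lt_div_iff₀ hxz] at key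
  rw [Function.comp_apply, Function.comp_apply, Function.comp_apply,
    div_lt_div_iff₀ (by linarith) (by linarith)]
  linear_combination key

lemma eq_of_forall_le (hgeo : IsGeodesicSpace Y) {y₁ y₂ : Y} (h₁ : ∀ y, f y₁ ≤ f y)
    (h₂ : ∀ y, f y₂ ≤ f y) : y₁ = y₂ := by
  by_contra hne
  obtain ⟨γ, hγ0, hγd, hγ⟩ := hgeo y₁ y₂ hne
  have hd : 0 < dist y₁ y₂ := dist_pos.2 hne
  have hmid := (hf.strictConvexOn_comp (convex_Icc _ _) hγ).2 (left_mem_Icc.2 hd.le)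
    (right_mem_Icc.2 hd.le) hd.ne (by norm_num : (0 : ℝ) < 1 / 2) (by norm_num : (0 : ℝ) < 1 / 2)
    (by norm_num)
  simp only [Function.comp_apply, smul_eq_mul, hγ0, hγd] at hmid
  linarith [h₁ (γ (1 / 2 * 0 + 1 / 2 * dist y₁ y₂)), h₁ y₂, h₂ y₁]

lemma existsUnique_forall_le (hcont : Continuous f) (hgeo : IsGeodesicSpace Y) {y₀ : Y}
    (hK : IsCompact (f ⁻¹' Iic (f y₀))) : ∃! z, ∀ y, f z ≤ f y := by
  obtain ⟨z, hz⟩ := hcont.exists_forall_le' y₀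
    (mem_cocompact.2 ⟨_, hK, fun y hy => le_of_lt (not_le.1 hy)⟩)
  exact ⟨z, hz, fun w hw => hf.eq_of_forall_le hgeo hw hz⟩

lemma add_mul_dist_sub_one_le (hgeo : IsGeodesicSpace Y) {z : Y} (hz : ∀ y, f z ≤ f y)
    {c : ℝ} (hc : 0 ≤ c) (hsphere : ∀ w ∈ sphere z 1, f z + c ≤ f w) (y : Y) :
    f z + c * (dist z y - 1) ≤ f y := by
  rcases lt_or_ge (dist z y) 1 with hlt | hge
  · nlinarith [hz y]
  have hne : z ≠ y := by rintro rfl; simp at hge; linarith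
  obtain ⟨σ, hσ0, hσd, hσ⟩ := hgeo z y hne
  have hR : 0 < dist z y := by linarith
  have hσ1 : σ 1 ∈ sphere z 1 := by
    rw [mem_sphere, ← hσ0, hσ 1 ⟨zero_le_one, hge⟩ 0 ⟨le_rfl, hR.le⟩]
    norm_num
  have hslope := (hf.strictConvexOn_comp (convex_Icc _ _) hσ).convexOn.secant_mono
    (left_mem_Icc.2 hR.le) ⟨zero_le_one, hge⟩ (right_mem_Icc.2 hR.le) one_ne_zero hR.ne' hge
  simp only [Function.comp_apply, hσ0, hσd, sub_zero, div_one] at hslope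
  rw [le_div_iff₀ hR] at hslope
  nlinarith [hsphere _ hσ1]

lemma exists_tendsto_slope_ge {y₀ : Y} {C D : ℝ} (h : ∀ y, C * dist y y₀ - D ≤ f y)
    {γ : ℝ → Y} (hγ0 : γ 0 = y₀) (hγ : IsGeodesicOn γ (Ici 0)) :
    ∃ L : EReal, (C : EReal) ≤ L ∧ Tendsto (fun t => ((f (γ t) / t : ℝ) : EReal)) atTop (𝓝 L) := by
  obtain ⟨L, hL⟩ := (hf.strictConvexOn_comp (convex_Ici 0) hγ).convexOn.exists_tendsto_div_atTop
  refine ⟨L, coe_le_of_tendsto_div hL (D := D) fun t ht => ?_, hL⟩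
  have := h (γ t)
  rwa [← hγ0, hγ.dist_zero ht] at this

end StrictConvexAlongGeodesics

lemma exists_pos_add_le_on_sphere [ProperSpace Y] {f : Y → ℝ} (hcont : Continuous f) {z : Y}
    (huniq : ∀ y, (∀ x, f y ≤ f x) → y = z) (hz : ∀ y, f z ≤ f y) :
    ∃ c > 0, ∀ w ∈ sphere z 1, f z + c ≤ f w := by
  rcases (sphere z 1).eq_empty_or_nonempty with hempty | hne
  · exact ⟨1, one_pos, by simp [hempty]⟩
  obtain ⟨w, hw, hmin⟩ := (isCompact_sphere z 1).exists_isMinOn hne hcont.continuousOn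
  have hzw : f z < f w := by
    refine (hz w).lt_of_ne fun heq => ?_
    have : w = z := huniq w fun x => heq ▸ hz x
    simp [this] at hw
  exact ⟨f w - f z, by linarith, fun w' hw' => by linarith [isMinOn_iff.1 hmin w' hw']⟩

lemma StrictConvexAlongGeodesics.exists_linear_lower_bound [ProperSpace Y] {f : Y → ℝ}
    (hf : StrictConvexAlongGeodesics f) (hcont : Continuous f) (hgeo : IsGeodesicSpace Y)
    (y₀ : Y) (hmin : ∃! z, ∀ y, f z ≤ f y) :
    ∃ C D : ℝ, 0 < C ∧ 0 < D ∧ ∀ y, C * dist y y₀ - D ≤ f y := by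
  obtain ⟨z, hz, huniq⟩ := hmin
  obtain ⟨c, hc, hsphere⟩ := exists_pos_add_le_on_sphere hcont huniq hz
  refine ⟨c, c * (dist z y₀ + 1) + |f z| + 1, hc, by positivity, fun y => ?_⟩
  have hgrowth := hf.add_mul_dist_sub_one_le hgeo hz hc.le hsphere y
  have htri : dist y y₀ ≤ dist z y + dist z y₀ := by
    rw [dist_comm z y]; exact dist_triangle y z y₀
  nlinarith [mul_le_mul_of_nonneg_left htri hc.le, neg_abs_le (f z)]

lemma isCompact_preimage_Icc_of_linear_lower_bound [ProperSpace Y] {f : Y → ℝ}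
    (hcont : Continuous f) {y₀ : Y} {C D : ℝ} (hC : 0 < C) (h : ∀ y, C * dist y y₀ - D ≤ f y)
    (a b : ℝ) : IsCompact (f ⁻¹' Icc a b) := by
  refine isCompact_of_isClosed_isBounded (isClosed_Icc.preimage hcont)
    ((isBounded_closedBall (x := y₀) (r := (b + D) / C)).subset fun y hy => ?_)
  rw [mem_closedBall, le_div_iff₀ hC]
  linarith [h y, hy.2]

-- The ray is a pointwise limit along one ultrafilter; properness provides the limits.
lemma exists_isGeodesicOn_Ici_of_segments [ProperSpace Y] {K : Set Y} (hK : IsClosed K) {x : Y}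
    {σ : ℕ → ℝ → Y} {d : ℕ → ℝ} (hd : Tendsto d atTop atTop) (hσ0 : ∀ n, σ n 0 = x)
    (hσ : ∀ n, IsGeodesicOn (σ n) (Icc 0 (d n))) (hσK : ∀ n, ∀ t ∈ Icc 0 (d n), σ n t ∈ K) :
    ∃ γ : ℝ → Y, γ 0 = x ∧ IsGeodesicOn γ (Ici 0) ∧ ∀ t, 0 ≤ t → γ t ∈ K := by
  set U : Ultrafilter ℕ := Ultrafilter.of atTop
  have hU : ∀ {t : ℝ}, 0 ≤ t → ∀ᶠ n in (U : Filter ℕ), t ∈ Icc 0 (d n) := fun ht =>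
    Ultrafilter.of_le _ ((hd.eventually_ge_atTop _).mono fun n hn => ⟨ht, hn⟩)
  have hlim : ∀ t, 0 ≤ t → ∃ p, Tendsto (fun n => σ n t) U (𝓝 p) := by
    intro t ht
    have hball : ∀ᶠ n in (U : Filter ℕ), σ n t ∈ closedBall x t := (hU ht).mono fun n hn => by
      rw [mem_closedBall, ← hσ0 n, hσ n t hn 0 ⟨le_rfl, ht.trans hn.2⟩, sub_zero,
        abs_of_nonneg ht]
    obtain ⟨p, -, hp⟩ := (isCompact_closedBall x t).ultrafilter_le_nhds
      (U.map fun n => σ n t) (le_principal_iff.2 hball)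
    exact ⟨p, hp⟩
  have : Nonempty Y := ⟨x⟩
  choose! γ hγ using hlim
  refine ⟨γ, tendsto_nhds_unique (hγ 0 le_rfl) (by simp [hσ0]), fun s hs t ht => ?_,
    fun t ht => hK.mem_of_tendsto (hγ t ht) ((hU ht).mono fun n hn => hσK n t hn)⟩
  exact tendsto_nhds_unique ((hγ s hs).dist (hγ t ht)) (tendsto_const_nhds.congr'
    (((hU hs).and (hU ht)).mono fun n hn => (hσ n s hn.1 t hn.2).symm))

lemma StrictConvexAlongGeodesics.isBounded_sublevel [ProperSpace Y] {f : Y → ℝ}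
    (hf : StrictConvexAlongGeodesics f) (hcont : Continuous f) (hgeo : IsGeodesicSpace Y)
    (y₀ : Y) (hslope : ∀ γ : ℝ → Y, γ 0 = y₀ → IsGeodesicOn γ (Ici 0) →
      ∃ L : EReal, 0 < L ∧ Tendsto (fun t => ((f (γ t) / t : ℝ) : EReal)) atTop (𝓝 L)) :
    Bornology.IsBounded (f ⁻¹' Iic (f y₀)) := by
  by_contra hunb
  have hfar : ∀ n : ℕ, ∃ y, f y ≤ f y₀ ∧ (n : ℝ) < dist y₀ y := by
    intro n
    by_contra! h
    exact hunb ((isBounded_iff_subset_closedBall y₀).2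
      ⟨n, fun y hy => by rw [mem_closedBall, dist_comm]; exact h y hy⟩)
  choose y hy_le hy_far using hfar
  have hne : ∀ n, y₀ ≠ y n := fun n h => by
    simpa [← h] using (Nat.cast_nonneg n).trans_lt (hy_far n)
  choose σ hσ0 hσd hσ using fun n => hgeo y₀ (y n) (hne n)
  have hσK : ∀ n, ∀ t ∈ Icc 0 (dist y₀ (y n)), σ n t ∈ f ⁻¹' Iic (f y₀) := fun n t ht => by
    have hd := ht.1.trans ht.2
    have := (hf.strictConvexOn_comp (convex_Icc _ _) (hσ n)).convexOn.le_max_of_mem_Icc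
      (left_mem_Icc.2 hd) (right_mem_Icc.2 hd) ht
    simp only [Function.comp_apply, hσ0, hσd] at this
    exact this.trans (max_le le_rfl (hy_le n))
  obtain ⟨γ, hγ0, hγ, hγK⟩ := exists_isGeodesicOn_Ici_of_segments
    (isClosed_Iic.preimage hcont)
    (tendsto_atTop_mono (fun n => (hy_far n).le) tendsto_natCast_atTop_atTop) hσ0 hσ hσK
  obtain ⟨L, hL, hlim⟩ := hslope γ hγ0 hγ
  have hL0 : L ≤ ((0 : ℝ) : EReal) :=
    le_coe_of_tendsto_div hlim (D := f y₀) fun t ht => by simpa using hγK t ht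
  exact absurd hL (not_lt.2 (by simpa using hL0))

end Geodesics

theorem stmt_14_general {Y : Type*} [MetricSpace Y] [ProperSpace Y] (y₀ : Y)
    (f : Y → ℝ) (hf : Continuous f)
    (hgeo : ∀ x y : Y, x ≠ y → ∃ γ : ℝ → Y, γ 0 = x ∧ γ (dist x y) = y ∧
      ∀ s ∈ Set.Icc 0 (dist x y), ∀ t ∈ Set.Icc 0 (dist x y), dist (γ s) (γ t) = |s - t|)
    (hconv : ∀ (γ : ℝ → Y) (a b : ℝ), a < b →
      (∀ s ∈ Set.Icc a b, ∀ t ∈ Set.Icc a b, dist (γ s) (γ t) = |s - t|) →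
      γ a ≠ γ b → ∀ τ ∈ Set.Ioo a b,
        f (γ τ) < ((τ - a) / (b - a)) * f (γ b) + ((b - τ) / (b - a)) * f (γ a)) :
    List.TFAE
      [ ∃! ystar : Y, ∀ y : Y, f ystar ≤ f y,
        (∀ a b : ℝ, IsCompact (f ⁻¹' Set.Icc a b)) ∧ BddBelow (Set.range f),
        ∃ C D : ℝ, 0 < C ∧ 0 < D ∧ ∀ y : Y, C * dist y y₀ - D ≤ f y,
        ∀ γ : ℝ → Y, γ 0 = y₀ →
          (∀ s ∈ Set.Ici (0 : ℝ), ∀ t ∈ Set.Ici (0 : ℝ), dist (γ s) (γ t) = |s - t|) →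
          ∃ L : EReal, 0 < L ∧
            Filter.Tendsto (fun t : ℝ => ((f (γ t) / t : ℝ) : EReal)) Filter.atTop (nhds L),
        ∃ C : ℝ, 0 < C ∧ ∀ γ : ℝ → Y, γ 0 = y₀ →
          (∀ s ∈ Set.Ici (0 : ℝ), ∀ t ∈ Set.Ici (0 : ℝ), dist (γ s) (γ t) = |s - t|) →
          ∃ L : EReal, (C : EReal) < L ∧
            Filter.Tendsto (fun t : ℝ => ((f (γ t) / t : ℝ) : EReal)) Filter.atTop (nhds L)
      ] := by
  have hsc : StrictConvexAlongGeodesics f := hconv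
  have hgs : IsGeodesicSpace Y := hgeo
  have hmin : IsCompact (f ⁻¹' Iic (f y₀)) → ∃! z, ∀ y, f z ≤ f y :=
    hsc.existsUnique_forall_le hf hgs
  tfae_have 1 → 3 := hsc.exists_linear_lower_bound hf hgs y₀
  tfae_have 3 → 2 := fun ⟨C, D, hC, _, h⟩ =>
    ⟨isCompact_preimage_Icc_of_linear_lower_bound hf hC h,
      ⟨-D, forall_mem_range.2 fun y => by
        linarith [h y, (by positivity : 0 ≤ C * dist y y₀)]⟩⟩
  tfae_have 2 → 1 := fun ⟨hK, m, hm⟩ => hmin <| (hK m (f y₀)).of_isClosed_subset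
    (isClosed_Iic.preimage hf) fun y hy => ⟨hm (mem_range_self y), hy⟩
  tfae_have 3 → 5 := fun ⟨C, D, hC, _, h⟩ => ⟨C / 2, half_pos hC, fun γ hγ0 hγ =>
    let ⟨L, hCL, hL⟩ := hsc.exists_tendsto_slope_ge h hγ0 hγ
    ⟨L, (EReal.coe_lt_coe_iff.2 (half_lt_self hC)).trans_le hCL, hL⟩⟩
  tfae_have 5 → 4 := fun ⟨C, hC, h⟩ γ hγ0 hγ =>
    let ⟨L, hCL, hL⟩ := h γ hγ0 hγ
    ⟨L, (EReal.coe_pos.2 hC).trans hCL, hL⟩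
  tfae_have 4 → 1 := fun h => hmin <| isCompact_of_isClosed_isBounded
    (isClosed_Iic.preimage hf) (hsc.isBounded_sublevel hf hgs y₀ h)
  tfae_finish

/-- Main theorem: on a nonempty proper geodesic metric space in which every geodesic segment
extends to a ray, for a continuous `f : Y → ℝ` strictly convex along geodesics, the
following are equivalent: (1) `f` admits a unique global minimum; (2) `f` is proper and
bounded below; (3) `f(y) ≥ C·d(y,y₀) - D` for some `C, D > 0`; (4) the asymptotic slope of
`f` along every unit-speed geodesic ray from `y₀` is `> 0`; (5) there is `C > 0` such that
this asymptotic slope is `> C` for every such ray. -/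
theorem stmt_14 {Y : Type*} [MetricSpace Y] [ProperSpace Y] [Nonempty Y] (y₀ : Y)
    (f : Y → ℝ) (hf : Continuous f)
    (hgeo : ∀ x y : Y, x ≠ y → ∃ γ : ℝ → Y, γ 0 = x ∧ γ (dist x y) = y ∧
      ∀ s ∈ Set.Icc 0 (dist x y), ∀ t ∈ Set.Icc 0 (dist x y), dist (γ s) (γ t) = |s - t|)
    (hext : ∀ (γ : ℝ → Y) (T : ℝ), 0 < T →
      (∀ s ∈ Set.Icc 0 T, ∀ t ∈ Set.Icc 0 T, dist (γ s) (γ t) = |s - t|) →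
      ∃ γ' : ℝ → Y, (∀ s ∈ Set.Icc 0 T, γ' s = γ s) ∧
        ∀ s ∈ Set.Ici (0 : ℝ), ∀ t ∈ Set.Ici (0 : ℝ), dist (γ' s) (γ' t) = |s - t|)
    (hconv : ∀ (γ : ℝ → Y) (a b : ℝ), a < b →
      (∀ s ∈ Set.Icc a b, ∀ t ∈ Set.Icc a b, dist (γ s) (γ t) = |s - t|) →
      γ a ≠ γ b → ∀ τ ∈ Set.Ioo a b,
        f (γ τ) < ((τ - a) / (b - a)) * f (γ b) + ((b - τ) / (b - a)) * f (γ a)) :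
    List.TFAE
      [ ∃! ystar : Y, ∀ y : Y, f ystar ≤ f y,
        (∀ a b : ℝ, IsCompact (f ⁻¹' Set.Icc a b)) ∧ BddBelow (Set.range f),
        ∃ C D : ℝ, 0 < C ∧ 0 < D ∧ ∀ y : Y, C * dist y y₀ - D ≤ f y,
        ∀ γ : ℝ → Y, γ 0 = y₀ →
          (∀ s ∈ Set.Ici (0 : ℝ), ∀ t ∈ Set.Ici (0 : ℝ), dist (γ s) (γ t) = |s - t|) →
          ∃ L : EReal, 0 < L ∧
            Filter.Tendsto (fun t : ℝ => ((f (γ t) / t : ℝ) : EReal)) Filter.atTop (nhds L),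
        ∃ C : ℝ, 0 < C ∧ ∀ γ : ℝ → Y, γ 0 = y₀ →
          (∀ s ∈ Set.Ici (0 : ℝ), ∀ t ∈ Set.Ici (0 : ℝ), dist (γ s) (γ t) = |s - t|) →
          ∃ L : EReal, (C : EReal) < L ∧
            Filter.Tendsto (fun t : ℝ => ((f (γ t) / t : ℝ) : EReal)) Filter.atTop (nhds L)
      ] :=
  stmt_14_general y₀ f hf hgeo hconv
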